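/- Let g and ḡ be projectively equivalent pseudo-Riemannian metrics on a manifold M, and let L = |det ḡ / det g|^{1/(n+1)} g ḡ^{-1} g be the associated tensor, with corresponding 1-form Λ from the equation ∇_X L = X^♭ ⊙ Λ. Then the following are equivalent: (1) g and ḡ are affinely equivalent (have the same Levi-Civita connection); (2) L is parallel with respect to the Levi-Civita connection of g; (3) Λ is identically zero. -/

import Mathlib

open Real Matrix Finset

/-! Coordinate framework for pseudo-Riemannian geometry on `ℝ^ι`:
metrics are matrix-valued functions, and the Levi-Civita connection is given by
the Christoffel symbols. -/

variable {ι : Type} [Fintype ι] [DecidableEq ι]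

/-- Partial derivative in the `i`-th coordinate direction. -/
noncomputable def pd (i : ι) (f : (ι → ℝ) → ℝ) (x : ι → ℝ) : ℝ :=
  fderiv ℝ f x (Pi.single i 1)

/-- Christoffel symbols `Γ^k_{ij}` of a metric `g` in coordinates. -/
noncomputable def christoffel (g : (ι → ℝ) → Matrix ι ι ℝ) (k i j : ι) (x : ι → ℝ) : ℝ :=
  (1 / 2) * ∑ l, (g x)⁻¹ k l *
    (pd i (fun y => g y j l) x + pd j (fun y => g y i l) x - pd l (fun y => g y i j) x)

/-- Covariant derivative `(∇_{∂k} L)_{ij}` of a `(0,2)`-tensor field `L`. -/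
noncomputable def covDer2 (g L : (ι → ℝ) → Matrix ι ι ℝ) (k i j : ι) (x : ι → ℝ) : ℝ :=
  pd k (fun y => L y i j) x - (∑ l, christoffel g l k i x * L x l j)
    - ∑ l, christoffel g l k j x * L x i l

/-- Covariant derivative `(∇_{∂k} Λ)_i` of a 1-form `Λ`. -/
noncomputable def covDer1 (g : (ι → ℝ) → Matrix ι ι ℝ) (Λ : (ι → ℝ) → ι → ℝ)
    (k i : ι) (x : ι → ℝ) : ℝ :=
  pd k (fun y => Λ y i) x - ∑ l, christoffel g l k i x * Λ x l

/-- Covariant derivative `(∇_{∂k} X)^l` of a vector field `X`. -/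
noncomputable def covDerVF (g : (ι → ℝ) → Matrix ι ι ℝ) (X : (ι → ℝ) → ι → ℝ)
    (k l : ι) (x : ι → ℝ) : ℝ :=
  pd k (fun y => X y l) x + ∑ m, christoffel g l k m x * X x m

/-- The `l`-th component of `R(∂i,∂j)∂k`, with the curvature convention
`R(X,Y)Z = ∇_X ∇_Y Z − ∇_Y ∇_X Z − ∇_{[X,Y]} Z`. -/
noncomputable def riem (g : (ι → ℝ) → Matrix ι ι ℝ) (l i j k : ι) (x : ι → ℝ) : ℝ :=
  pd i (christoffel g l j k) x - pd j (christoffel g l i k) x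
    + (∑ m, christoffel g l i m x * christoffel g m j k x)
    - ∑ m, christoffel g l j m x * christoffel g m i k x

/-- Ricci tensor `Ric(∂i,∂j) = trace (Z ↦ R(Z,∂i)∂j)`. -/
noncomputable def ricci (g : (ι → ℝ) → Matrix ι ι ℝ) (i j : ι) (x : ι → ℝ) : ℝ :=
  ∑ l, riem g l l i j x

/-- All matrix entries of `g` are smooth functions. -/
def SmoothM (g : (ι → ℝ) → Matrix ι ι ℝ) : Prop :=
  ∀ i j, ContDiff ℝ (⊤ : ℕ∞) fun x => g x i j

/-- `g` is symmetric. -/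
def SymM (g : (ι → ℝ) → Matrix ι ι ℝ) : Prop := ∀ x, (g x)ᵀ = g x

/-- `g` is everywhere nondegenerate. -/
def NondegM (g : (ι → ℝ) → Matrix ι ι ℝ) : Prop := ∀ x, (g x).det ≠ 0

/-- The projective equation `∇_X L = X^♭ ⊙ Λ`; in coordinates
`(∇_{∂k} L)_{ij} = g_{ki} Λ_j + g_{kj} Λ_i`. -/
def ProjEqn (g L : (ι → ℝ) → Matrix ι ι ℝ) (Λ : (ι → ℝ) → ι → ℝ) : Prop :=
  ∀ k i j x, covDer2 g L k i j x = g x k i * Λ x j + g x k j * Λ x i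

/-- `ξ` is a cone vector field: `∇̂_X ξ = X` for all `X`. -/
def IsConeVF (g : (ι → ℝ) → Matrix ι ι ℝ) (ξ : (ι → ℝ) → ι → ℝ) : Prop :=
  ∀ k l x, covDerVF g ξ k l x = if k = l then 1 else 0

/-- The tensor `L(g,ḡ) = |det ḡ / det g|^{1/(n+1)} g ḡ⁻¹ g` associated to a pair of
metrics. -/
noncomputable def Lten {ι : Type} [Fintype ι] [DecidableEq ι]
    (g gbar : (ι → ℝ) → Matrix ι ι ℝ) (x : ι → ℝ) : Matrix ι ι ℝ :=
  (|((gbar x).det / (g x).det)| ^ ((1 : ℝ) / (Fintype.card ι + 1))) • (g x * (gbar x)⁻¹ * g x)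

set_option linter.unusedSectionVars false

section PdCalc

variable {ι : Type} [Fintype ι] [DecidableEq ι]

lemma pd_congr {f h : (ι → ℝ) → ℝ} (he : ∀ y, f y = h y) (k : ι) (x : ι → ℝ) :
    pd k f x = pd k h x := by
  have : f = h := funext he
  rw [this]

lemma pd_const (c : ℝ) (k : ι) (x : ι → ℝ) : pd k (fun _ => c) x = 0 := by
  simp [pd]

lemma pd_hasFDerivAt {f : (ι → ℝ) → ℝ} {f' : (ι → ℝ) →L[ℝ] ℝ} {x : ι → ℝ}
    (hf : HasFDerivAt f f' x) (k : ι) : pd k f x = f' (Pi.single k 1) := by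
  rw [pd, hf.fderiv]

lemma pd_add {f h : (ι → ℝ) → ℝ} {x : ι → ℝ} (hf : DifferentiableAt ℝ f x)
    (hh : DifferentiableAt ℝ h x) (k : ι) :
    pd k (fun y => f y + h y) x = pd k f x + pd k h x := by
  rw [pd_hasFDerivAt (hf.hasFDerivAt.fun_add hh.hasFDerivAt)]
  simp [pd]

lemma pd_sub {f h : (ι → ℝ) → ℝ} {x : ι → ℝ} (hf : DifferentiableAt ℝ f x)
    (hh : DifferentiableAt ℝ h x) (k : ι) :
    pd k (fun y => f y - h y) x = pd k f x - pd k h x := by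
  rw [pd_hasFDerivAt (hf.hasFDerivAt.fun_sub hh.hasFDerivAt)]
  simp [pd]

lemma pd_mul {f h : (ι → ℝ) → ℝ} {x : ι → ℝ} (hf : DifferentiableAt ℝ f x)
    (hh : DifferentiableAt ℝ h x) (k : ι) :
    pd k (fun y => f y * h y) x = pd k f x * h x + f x * pd k h x := by
  rw [pd_hasFDerivAt (hf.hasFDerivAt.fun_mul hh.hasFDerivAt)]
  simp [pd]
  ring

lemma pd_sum {β : Type*} {s : Finset β} {f : β → (ι → ℝ) → ℝ} {x : ι → ℝ}
    (hf : ∀ b ∈ s, DifferentiableAt ℝ (f b) x) (k : ι) :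
    pd k (fun y => ∑ b ∈ s, f b y) x = ∑ b ∈ s, pd k (f b) x := by
  rw [pd, fderiv_fun_sum hf]
  simp [pd]

lemma pd_prod {β : Type*} [DecidableEq β] {s : Finset β} {f : β → (ι → ℝ) → ℝ} {x : ι → ℝ}
    (hf : ∀ b ∈ s, DifferentiableAt ℝ (f b) x) (k : ι) :
    pd k (fun y => ∏ b ∈ s, f b y) x
      = ∑ b ∈ s, (∏ c ∈ s.erase b, f c x) * pd k (f b) x := by
  rw [pd_hasFDerivAt (HasFDerivAt.finset_prod (fun b hb => (hf b hb).hasFDerivAt))]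
  simp [pd]

lemma pd_inv {f : (ι → ℝ) → ℝ} {x : ι → ℝ} (hf : DifferentiableAt ℝ f x)
    (h0 : f x ≠ 0) (k : ι) :
    pd k (fun y => (f y)⁻¹) x = -pd k f x / f x ^ 2 := by
  have := (hasDerivAt_inv h0).comp_hasFDerivAt x hf.hasFDerivAt
  simp only [Function.comp_def] at this
  rw [pd_hasFDerivAt this]
  simp [pd]
  ring

lemma pd_abs {f : (ι → ℝ) → ℝ} {x : ι → ℝ} (hf : DifferentiableAt ℝ f x)
    (h0 : f x ≠ 0) (k : ι) :
    pd k (fun y => |f y|) x = (SignType.sign (f x) : ℝ) * pd k f x := by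
  have := (hasDerivAt_abs h0).comp_hasFDerivAt x hf.hasFDerivAt
  simp only [Function.comp_def] at this
  rw [pd_hasFDerivAt this]
  simp [pd]

lemma diffAt_abs {f : (ι → ℝ) → ℝ} {x : ι → ℝ} (hf : DifferentiableAt ℝ f x)
    (h0 : f x ≠ 0) : DifferentiableAt ℝ (fun y => |f y|) x :=
  ((hasDerivAt_abs h0).comp_hasFDerivAt x hf.hasFDerivAt).differentiableAt

end PdCalc

section MatCalc

variable {ι : Type} [Fintype ι] [DecidableEq ι]

lemma diffAt_fprod {β : Type} [DecidableEq β] {s : Finset β} {f : β → (ι → ℝ) → ℝ} {x : ι → ℝ}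
    (hf : ∀ b ∈ s, DifferentiableAt ℝ (f b) x) :
    DifferentiableAt ℝ (fun y => ∏ b ∈ s, f b y) x :=
  (HasFDerivAt.finset_prod fun b hb => (hf b hb).hasFDerivAt).differentiableAt

/-- Entrywise partial derivative of a matrix-valued function. -/
noncomputable def pdM (k : ι) (A : (ι → ℝ) → Matrix ι ι ℝ) (x : ι → ℝ) : Matrix ι ι ℝ :=
  Matrix.of fun i j => pd k (fun y => A y i j) x

/-- All entries differentiable. -/
def Dm (A : (ι → ℝ) → Matrix ι ι ℝ) : Prop := ∀ i j, Differentiable ℝ fun y => A y i j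

lemma pdM_apply (k : ι) (A : (ι → ℝ) → Matrix ι ι ℝ) (x : ι → ℝ) (i j : ι) :
    pdM k A x i j = pd k (fun y => A y i j) x := rfl

lemma pdM_congr {A B : (ι → ℝ) → Matrix ι ι ℝ} (h : ∀ y, A y = B y) (k : ι) (x : ι → ℝ) :
    pdM k A x = pdM k B x := by
  have : A = B := funext h
  rw [this]

lemma pdM_const (C : Matrix ι ι ℝ) (k : ι) (x : ι → ℝ) : pdM k (fun _ => C) x = 0 := by
  ext i j
  simp only [pdM_apply, pd_const]
  rfl

lemma pdM_mul {A B : (ι → ℝ) → Matrix ι ι ℝ} (hA : Dm A) (hB : Dm B) (k : ι) (x : ι → ℝ) :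
    pdM k (fun y => A y * B y) x = pdM k A x * B x + A x * pdM k B x := by
  ext i j
  rw [pdM_apply,
    pd_congr (h := fun y => ∑ l, A y i l * B y l j) (fun y => Matrix.mul_apply) k x,
    pd_sum (fun l _ => ((hA i l).differentiableAt.fun_mul (hB l j).differentiableAt)) k]
  simp only [Matrix.add_apply, Matrix.mul_apply, pdM_apply]
  rw [← Finset.sum_add_distrib]
  refine Finset.sum_congr rfl fun l _ => ?_
  rw [pd_mul (hA i l).differentiableAt (hB l j).differentiableAt]

lemma pdM_smul {c : (ι → ℝ) → ℝ} {A : (ι → ℝ) → Matrix ι ι ℝ}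
    (hc : Differentiable ℝ c) (hA : Dm A) (k : ι) (x : ι → ℝ) :
    pdM k (fun y => c y • A y) x = pd k c x • A x + c x • pdM k A x := by
  ext i j
  rw [pdM_apply, pd_congr (f := fun y => (c y • A y) i j) (h := fun y => c y * A y i j)
      (fun y => rfl) k x,
    pd_mul hc.differentiableAt (hA i j).differentiableAt]
  simp [pdM_apply]

lemma dm_mul {A B : (ι → ℝ) → Matrix ι ι ℝ} (hA : Dm A) (hB : Dm B) :
    Dm (fun y => A y * B y) := by
  intro i j
  have : (fun y => (A y * B y) i j) = fun y => ∑ l, A y i l * B y l j := by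
    funext y; exact Matrix.mul_apply
  rw [this]
  exact Differentiable.fun_sum fun l _ => (hA i l).fun_mul (hB l j)

lemma dm_smul {c : (ι → ℝ) → ℝ} {A : (ι → ℝ) → Matrix ι ι ℝ}
    (hc : Differentiable ℝ c) (hA : Dm A) : Dm (fun y => c y • A y) :=
  fun i j => hc.mul (hA i j)

lemma diff_det {A : (ι → ℝ) → Matrix ι ι ℝ} (hA : Dm A) :
    Differentiable ℝ fun y => (A y).det := by
  have : (fun y => (A y).det)
      = fun y => ∑ σ : Equiv.Perm ι, ((Equiv.Perm.sign σ : ℤ) : ℝ) * ∏ i, A y (σ i) i := by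
    funext y; exact Matrix.det_apply' (A y)
  rw [this]
  exact Differentiable.fun_sum fun σ _ => fun x =>
    (differentiableAt_const _).fun_mul (diffAt_fprod fun i _ => (hA (σ i) i).differentiableAt)

/-- Jacobi's formula. -/
lemma pd_det {A : (ι → ℝ) → Matrix ι ι ℝ} (hA : Dm A) (k : ι) (x : ι → ℝ) :
    pd k (fun y => (A y).det) x = Matrix.trace (Matrix.adjugate (A x) * pdM k A x) := by
  -- step 1: permutation-sum formula
  rw [pd_congr (h := fun y => ∑ σ : Equiv.Perm ι, ((Equiv.Perm.sign σ : ℤ) : ℝ)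
        * ∏ i, A y (σ i) i) (fun y => Matrix.det_apply' (A y)) k x,
    pd_sum (fun σ _ => (differentiableAt_const _).fun_mul
      (diffAt_fprod fun i _ => (hA (σ i) i).differentiableAt)) k]
  have hstep : ∀ σ : Equiv.Perm ι,
      pd k (fun y => ((Equiv.Perm.sign σ : ℤ) : ℝ) * ∏ i, A y (σ i) i) x
        = ((Equiv.Perm.sign σ : ℤ) : ℝ)
            * ∑ i, (∏ j ∈ Finset.univ.erase i, A x (σ j) j) * pdM k A x (σ i) i := by
    intro σ
    rw [pd_mul (differentiableAt_const _)
        (diffAt_fprod fun i _ => (hA (σ i) i).differentiableAt),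
      pd_const, pd_prod (fun i _ => (hA (σ i) i).differentiableAt)]
    simp [pdM_apply]
  simp only [hstep]
  -- step 2: reorganize as sum over rows of determinants of updated matrices
  have step2 : ∑ σ : Equiv.Perm ι, ((Equiv.Perm.sign σ : ℤ) : ℝ)
        * ∑ i, (∏ j ∈ Finset.univ.erase i, A x (σ j) j) * pdM k A x (σ i) i
      = ∑ i, ((A x).updateRow i (pdM k A x i)).det := by
    have rhs : ∀ i, ((A x).updateRow i (pdM k A x i)).det
        = ∑ σ : Equiv.Perm ι, ((Equiv.Perm.sign σ : ℤ) : ℝ)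
            * ((∏ j ∈ Finset.univ.erase (σ.symm i), A x (σ j) j) * pdM k A x i (σ.symm i)) := by
      intro i
      rw [Matrix.det_apply']
      refine Finset.sum_congr rfl fun σ _ => ?_
      congr 1
      have hmem : (σ.symm i) ∈ (Finset.univ : Finset ι) := Finset.mem_univ _
      rw [← Finset.mul_prod_erase _ _ hmem]
      have h1 : (A x).updateRow i (pdM k A x i) (σ (σ.symm i)) (σ.symm i)
          = pdM k A x i (σ.symm i) := by
        rw [Equiv.apply_symm_apply, Matrix.updateRow_self]
      rw [h1, mul_comm]
      congr 1
      refine Finset.prod_congr rfl fun j hj => ?_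
      have hne : σ j ≠ i := by
        intro hc
        exact (Finset.mem_erase.mp hj).1 (by rw [← hc, Equiv.symm_apply_apply])
      rw [Matrix.updateRow_ne hne]
    simp only [rhs]
    rw [Finset.sum_comm]
    refine Finset.sum_congr rfl fun σ _ => ?_
    rw [Finset.mul_sum]
    refine Fintype.sum_equiv σ _ _ fun i => ?_
    simp only [Equiv.symm_apply_apply]
  rw [step2]
  -- step 3: cramer/adjugate expansion of each updated determinant
  have step3 : ∀ i, ((A x).updateRow i (pdM k A x i)).det
      = ∑ j, Matrix.adjugate (A x) j i * pdM k A x i j := by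
    intro i
    rw [← Matrix.cramer_transpose_apply]
    conv_lhs => rw [pi_eq_sum_univ (pdM k A x i), map_sum]
    rw [Finset.sum_apply]
    refine Finset.sum_congr rfl fun j _ => ?_
    rw [_root_.map_smul]
    simp only [Pi.smul_apply, smul_eq_mul]
    rw [mul_comm]
    congr 1
    have hs : (fun j1 => if j = j1 then (1 : ℝ) else 0) = Pi.single j 1 := by
      funext m
      simp [Pi.single_apply, eq_comm]
    rw [hs, Matrix.adjugate_def]
    rfl
  simp only [step3]
  rw [Matrix.trace]
  simp only [Matrix.diag_apply, Matrix.mul_apply]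
  rw [Finset.sum_comm]

end MatCalc

section InvCalc

variable {ι : Type} [Fintype ι] [DecidableEq ι]

lemma dm_adjugate {A : (ι → ℝ) → Matrix ι ι ℝ} (hA : Dm A) :
    Dm (fun y => (A y).adjugate) := by
  intro i j
  have he : (fun y => (A y).adjugate i j)
      = fun y => ((A y).updateRow j (Pi.single i 1)).det := by
    funext y
    rw [Matrix.adjugate_apply]
  rw [he]
  refine diff_det ?_
  intro a b
  by_cases h : a = j
  · subst h
    simp only [Matrix.updateRow_self]
    exact differentiable_const _
  · simp only [Matrix.updateRow_ne h]
    exact hA a b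

lemma dm_inv {A : (ι → ℝ) → Matrix ι ι ℝ} (hA : Dm A) (h0 : ∀ y, (A y).det ≠ 0) :
    Dm (fun y => (A y)⁻¹) := by
  intro i j
  have he : (fun y => (A y)⁻¹ i j) = fun y => ((A y).det)⁻¹ * (A y).adjugate i j := by
    funext y
    rw [Matrix.inv_def, Ring.inverse_eq_inv']
    rfl
  rw [he]
  exact ((diff_det hA).inv h0).mul (dm_adjugate hA i j)

lemma pdM_inv {A : (ι → ℝ) → Matrix ι ι ℝ} (hA : Dm A) (h0 : ∀ y, (A y).det ≠ 0)
    (k : ι) (x : ι → ℝ) :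
    pdM k (fun y => (A y)⁻¹) x = -((A x)⁻¹ * pdM k A x * (A x)⁻¹) := by
  have hunit : ∀ y, IsUnit (A y).det := fun y => isUnit_iff_ne_zero.mpr (h0 y)
  have h1 : pdM k (fun y => A y * (A y)⁻¹) x = 0 := by
    rw [pdM_congr (fun y => Matrix.mul_nonsing_inv _ (hunit y))]
    exact pdM_const 1 k x
  rw [pdM_mul hA (dm_inv hA h0)] at h1
  have h2 : A x * pdM k (fun y => (A y)⁻¹) x = -(pdM k A x * (A x)⁻¹) :=
    by rw [add_comm] at h1; rwa [add_eq_zero_iff_eq_neg] at h1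
  calc pdM k (fun y => (A y)⁻¹) x
      = (A x)⁻¹ * (A x * pdM k (fun y => (A y)⁻¹) x) := by
        rw [← Matrix.mul_assoc, Matrix.nonsing_inv_mul _ (hunit x), Matrix.one_mul]
    _ = (A x)⁻¹ * -(pdM k A x * (A x)⁻¹) := by rw [h2]
    _ = -((A x)⁻¹ * pdM k A x * (A x)⁻¹) := by rw [Matrix.mul_neg, Matrix.mul_assoc]

end InvCalc

section Metric

variable {ι : Type} [Fintype ι] [DecidableEq ι]

/-- The Christoffel matrix `(Γ_k)_{l m} = Γ^l_{km}`. -/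
noncomputable def Gm (g : (ι → ℝ) → Matrix ι ι ℝ) (k : ι) (x : ι → ℝ) : Matrix ι ι ℝ :=
  Matrix.of fun l m => christoffel g l k m x

lemma dm_of_smooth {g : (ι → ℝ) → Matrix ι ι ℝ} (hg : SmoothM g) : Dm g :=
  fun i j => (hg i j).differentiable (by simp)

lemma covDer2_eq (g M : (ι → ℝ) → Matrix ι ι ℝ) (k i j : ι) (x : ι → ℝ) :
    covDer2 g M k i j x = (pdM k M x - (Gm g k x)ᵀ * M x - M x * Gm g k x) i j := by
  have h1 : ((Gm g k x)ᵀ * M x) i j = ∑ l, christoffel g l k i x * M x l j := by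
    simp [Gm, Matrix.mul_apply]
  have h2 : (M x * Gm g k x) i j = ∑ l, christoffel g l k j x * M x i l := by
    simp only [Gm, Matrix.mul_apply, Matrix.of_apply]
    exact Finset.sum_congr rfl fun l _ => mul_comm _ _
  simp only [covDer2, Matrix.sub_apply, h1, h2, pdM_apply]

lemma sym_entry {g : (ι → ℝ) → Matrix ι ι ℝ} (hgs : SymM g) (y : ι → ℝ) (i j : ι) :
    g y i j = g y j i := by
  conv_lhs => rw [← hgs y]
  rfl

lemma christoffel_symm {g : (ι → ℝ) → Matrix ι ι ℝ} (hgs : SymM g) (k i j : ι) (x : ι → ℝ) :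
    christoffel g k i j x = christoffel g k j i x := by
  unfold christoffel
  congr 1
  refine Finset.sum_congr rfl fun l _ => ?_
  have h3 : pd l (fun y => g y i j) x = pd l (fun y => g y j i) x :=
    pd_congr (fun y => sym_entry hgs y i j) l x
  rw [h3]
  ring

/-- Contraction of Christoffel symbols with the metric. -/
lemma christoffel_contract {g : (ι → ℝ) → Matrix ι ι ℝ} (hgs : SymM g) (hgn : NondegM g)
    (k i j : ι) (x : ι → ℝ) :
    ∑ l, christoffel g l k i x * g x l j
      = (1 / 2) * (pd k (fun y => g y i j) x + pd i (fun y => g y k j) x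
          - pd j (fun y => g y k i) x) := by
  set c : ι → ℝ := fun m => pd k (fun y => g y i m) x + pd i (fun y => g y k m) x
      - pd m (fun y => g y k i) x with hc
  have hdelta : ∀ m, ∑ l, g x l j * (g x)⁻¹ l m = (1 : Matrix ι ι ℝ) j m := by
    intro m
    calc ∑ l, g x l j * (g x)⁻¹ l m = ∑ l, g x j l * (g x)⁻¹ l m :=
          Finset.sum_congr rfl fun l _ => by rw [sym_entry hgs x l j]
      _ = (g x * (g x)⁻¹) j m := (Matrix.mul_apply).symm
      _ = (1 : Matrix ι ι ℝ) j m := by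
          rw [Matrix.mul_nonsing_inv _ (isUnit_iff_ne_zero.mpr (hgn x))]
  calc ∑ l, christoffel g l k i x * g x l j
      = ∑ l, ∑ m, 1 / 2 * ((g x l j * (g x)⁻¹ l m) * c m) := by
        refine Finset.sum_congr rfl fun l _ => ?_
        show (1 / 2 * ∑ m, (g x)⁻¹ l m * c m) * g x l j = _
        rw [mul_comm, Finset.mul_sum, Finset.mul_sum]
        refine Finset.sum_congr rfl fun m _ => by ring
    _ = ∑ m, ∑ l, 1 / 2 * ((g x l j * (g x)⁻¹ l m) * c m) := Finset.sum_comm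
    _ = ∑ m, 1 / 2 * ((1 : Matrix ι ι ℝ) j m * c m) := by
        refine Finset.sum_congr rfl fun m _ => ?_
        have hsplit : (1 : ℝ) / 2 * ((∑ l, g x l j * (g x)⁻¹ l m) * c m)
            = ∑ l, 1 / 2 * ((g x l j * (g x)⁻¹ l m) * c m) := by
          rw [Finset.sum_mul, Finset.mul_sum]
        rw [← hdelta m, hsplit]
    _ = 1 / 2 * c j := by
        rw [← Finset.mul_sum]
        congr 1
        simp [Matrix.one_apply]

/-- The metric is parallel: `∂_k g = Γ_kᵀ g + g Γ_k`. -/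
lemma nabla_metric {g : (ι → ℝ) → Matrix ι ι ℝ} (hgs : SymM g) (hgn : NondegM g)
    (k : ι) (x : ι → ℝ) :
    pdM k g x = (Gm g k x)ᵀ * g x + g x * Gm g k x := by
  ext i j
  have h1 : ((Gm g k x)ᵀ * g x) i j = ∑ l, christoffel g l k i x * g x l j := by
    simp [Gm, Matrix.mul_apply]
  have h2 : (g x * Gm g k x) i j = ∑ l, christoffel g l k j x * g x l i := by
    simp only [Gm, Matrix.mul_apply, Matrix.of_apply]
    exact Finset.sum_congr rfl fun l _ => by rw [mul_comm, sym_entry hgs x i l]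
  rw [Matrix.add_apply, h1, h2, christoffel_contract hgs hgn k i j x,
    christoffel_contract hgs hgn k j i x, pdM_apply]
  have e1 : pd k (fun y => g y j i) x = pd k (fun y => g y i j) x :=
    pd_congr (fun y => sym_entry hgs y j i) k x
  rw [e1]
  ring

/-- A nondegenerate symmetric tensor parallel for `∇ᵍ` has the same Christoffel symbols. -/
lemma christoffel_eq_of_nabla {g h : (ι → ℝ) → Matrix ι ι ℝ} (hgs : SymM g)
    (hhs : SymM h) (hhn : NondegM h)
    (hnab : ∀ k x, pdM k h x = (Gm g k x)ᵀ * h x + h x * Gm g k x) :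
    ∀ k i j x, christoffel h k i j x = christoffel g k i j x := by
  intro k i j x
  have hpd : ∀ a b l, pd a (fun y => h y b l) x
      = ∑ m, christoffel g m a b x * h x m l + ∑ m, christoffel g m a l x * h x b m := by
    intro a b l
    have := congrFun (congrFun (hnab a x) b) l
    rw [pdM_apply] at this
    rw [this, Matrix.add_apply]
    have hA : ((Gm g a x)ᵀ * h x) b l = ∑ m, christoffel g m a b x * h x m l := by
      simp [Gm, Matrix.mul_apply]
    have hB : (h x * Gm g a x) b l = ∑ m, christoffel g m a l x * h x b m := by
      simp only [Gm, Matrix.mul_apply, Matrix.of_apply]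
      exact Finset.sum_congr rfl fun m _ => mul_comm _ _
    rw [hA, hB]
  have hcomb : ∀ l, pd i (fun y => h y j l) x + pd j (fun y => h y i l) x
      - pd l (fun y => h y i j) x = 2 * ∑ m, christoffel g m i j x * h x m l := by
    intro l
    rw [hpd i j l, hpd j i l, hpd l i j]
    have s1 : ∀ m, christoffel g m j i x = christoffel g m i j x :=
      fun m => christoffel_symm hgs m j i x
    have s2 : ∀ m, christoffel g m l i x = christoffel g m i l x :=
      fun m => christoffel_symm hgs m l i x
    have s3 : ∀ m, christoffel g m l j x = christoffel g m j l x :=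
      fun m => christoffel_symm hgs m l j x
    have s4 : ∀ m, h x m j = h x j m := fun m => sym_entry hhs x m j
    simp only [s1, s2, s3]
    have e1 : ∑ m, christoffel g m i l x * h x m j = ∑ m, christoffel g m i l x * h x j m :=
      Finset.sum_congr rfl fun m _ => by rw [s4 m]
    rw [e1]
    ring
  have hinner : ∀ m, ∑ l, (h x)⁻¹ k l * h x l m = (1 : Matrix ι ι ℝ) k m := by
    intro m
    rw [← Matrix.mul_apply, Matrix.nonsing_inv_mul _ (isUnit_iff_ne_zero.mpr (hhn x))]
  have lhs0 : christoffel h k i j x = (1 / 2 : ℝ) * ∑ l, (h x)⁻¹ k l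
      * (pd i (fun y => h y j l) x + pd j (fun y => h y i l) x
          - pd l (fun y => h y i j) x) := rfl
  rw [lhs0]
  calc (1 / 2 : ℝ) * ∑ l, (h x)⁻¹ k l * (pd i (fun y => h y j l) x
          + pd j (fun y => h y i l) x - pd l (fun y => h y i j) x)
      = 1 / 2 * ∑ l, (h x)⁻¹ k l * (2 * ∑ m, christoffel g m i j x * h x m l) := by
        congr 1
        exact Finset.sum_congr rfl fun l _ => by rw [hcomb l]
    _ = 1 / 2 * ∑ l, ∑ m, 2 * (christoffel g m i j x * ((h x)⁻¹ k l * h x l m)) := by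
        congr 1
        refine Finset.sum_congr rfl fun l _ => ?_
        rw [Finset.mul_sum, Finset.mul_sum]
        refine Finset.sum_congr rfl fun m _ => ?_
        rw [sym_entry hhs x m l]
        ring
    _ = 1 / 2 * ∑ m, ∑ l, 2 * (christoffel g m i j x * ((h x)⁻¹ k l * h x l m)) := by
        rw [Finset.sum_comm]
    _ = 1 / 2 * ∑ m, 2 * (christoffel g m i j x * (1 : Matrix ι ι ℝ) k m) := by
        congr 1
        refine Finset.sum_congr rfl fun m _ => ?_
        have hsplit : 2 * (christoffel g m i j x * ∑ l, (h x)⁻¹ k l * h x l m)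
            = ∑ l, 2 * (christoffel g m i j x * ((h x)⁻¹ k l * h x l m)) := by
          rw [Finset.mul_sum, Finset.mul_sum]
        rw [← hinner m, hsplit]
    _ = christoffel g k i j x := by
        have : ∀ m, 2 * (christoffel g m i j x * (1 : Matrix ι ι ℝ) k m)
            = if k = m then 2 * christoffel g m i j x else 0 := by
          intro m
          by_cases hm : k = m <;> simp [Matrix.one_apply, hm]
        simp only [this]
        rw [Finset.sum_ite_eq]
        simp

end Metric

section Nab

variable {ι : Type} [Fintype ι] [DecidableEq ι]

lemma pd_det_of_nab {g A : (ι → ℝ) → Matrix ι ι ℝ} (hA : Dm A) {k : ι} {x : ι → ℝ}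
    (hnab : pdM k A x = (Gm g k x)ᵀ * A x + A x * Gm g k x) :
    pd k (fun y => (A y).det) x = 2 * Matrix.trace (Gm g k x) * (A x).det := by
  rw [pd_det hA, hnab, Matrix.mul_add, Matrix.trace_add]
  have t1 : Matrix.trace ((A x).adjugate * ((Gm g k x)ᵀ * A x))
      = (A x).det * Matrix.trace (Gm g k x) := by
    rw [Matrix.trace_mul_comm, Matrix.mul_assoc, Matrix.mul_adjugate, Matrix.mul_smul,
      Matrix.mul_one, Matrix.trace_smul, Matrix.trace_transpose]
    simp [smul_eq_mul]
  have t2 : Matrix.trace ((A x).adjugate * (A x * Gm g k x))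
      = (A x).det * Matrix.trace (Gm g k x) := by
    rw [← Matrix.mul_assoc, Matrix.adjugate_mul, Matrix.smul_mul, Matrix.one_mul,
      Matrix.trace_smul]
    simp [smul_eq_mul]
  rw [t1, t2]
  ring

lemma nab_sandwich {g B : (ι → ℝ) → Matrix ι ι ℝ} (hgd : Dm g) (hgs : SymM g)
    (hgn : NondegM g) (hBd : Dm B) (hB0 : ∀ y, (B y).det ≠ 0) {k : ι} {x : ι → ℝ}
    (hBnab : pdM k B x = (Gm g k x)ᵀ * B x + B x * Gm g k x) :
    pdM k (fun y => g y * (B y)⁻¹ * g y) x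
      = (Gm g k x)ᵀ * (g x * (B x)⁻¹ * g x) + (g x * (B x)⁻¹ * g x) * Gm g k x := by
  have hBB : B x * (B x)⁻¹ = 1 := Matrix.mul_nonsing_inv _ (isUnit_iff_ne_zero.mpr (hB0 x))
  have hBB' : (B x)⁻¹ * B x = 1 := Matrix.nonsing_inv_mul _ (isUnit_iff_ne_zero.mpr (hB0 x))
  have hc1 : ∀ M : Matrix ι ι ℝ, B x * ((B x)⁻¹ * M) = M := fun M => by
    rw [← Matrix.mul_assoc, hBB, Matrix.one_mul]
  have hc2 : ∀ M : Matrix ι ι ℝ, (B x)⁻¹ * (B x * M) = M := fun M => by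
    rw [← Matrix.mul_assoc, hBB', Matrix.one_mul]
  rw [pdM_mul (dm_mul hgd (dm_inv hBd hB0)) hgd, pdM_mul hgd (dm_inv hBd hB0),
    pdM_inv hBd hB0, hBnab, nabla_metric hgs hgn]
  simp only [Matrix.mul_add, Matrix.add_mul, Matrix.neg_mul, Matrix.mul_neg,
    Matrix.mul_assoc, hc1, hc2]
  abel

end Nab

section LtenFacts

variable {ι : Type} [Fintype ι] [DecidableEq ι]

lemma sign_mul_self' {t : ℝ} (h : t ≠ 0) : (SignType.sign t : ℝ) * t = |t| := by
  rcases h.lt_or_gt with hlt | hgt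
  · rw [sign_neg hlt, abs_of_neg hlt]
    simp
  · rw [sign_pos hgt, abs_of_pos hgt]
    simp

lemma abs_rpow_hasDeriv {t : ℝ} (ht : t ≠ 0) (e : ℝ) :
    HasDerivAt (fun u : ℝ => |u| ^ e)
      (e * |t| ^ (e - 1) * (SignType.sign t : ℝ)) t := by
  have hb := Real.hasDerivAt_rpow_const (x := |t|) (p := e) (Or.inl (abs_ne_zero.mpr ht))
  have := hb.comp t (hasDerivAt_abs ht)
  simpa [Function.comp_def] using this

lemma pd_comp_deriv {φ : ℝ → ℝ} {d : ℝ} {f : (ι → ℝ) → ℝ} {x : ι → ℝ}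
    (hφ : HasDerivAt φ d (f x)) (hf : DifferentiableAt ℝ f x) (k : ι) :
    pd k (fun y => φ (f y)) x = d * pd k f x := by
  have := hφ.comp_hasFDerivAt x hf.hasFDerivAt
  simp only [Function.comp_def] at this
  rw [pd_hasFDerivAt this]
  simp [pd]

/-- The scalar coefficient in `Lten`. -/
noncomputable def coefL (g gbar : (ι → ℝ) → Matrix ι ι ℝ) (y : ι → ℝ) : ℝ :=
  |((gbar y).det / (g y).det)| ^ ((1 : ℝ) / (Fintype.card ι + 1))

variable {g gbar : (ι → ℝ) → Matrix ι ι ℝ}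

lemma Lten_eq (y : ι → ℝ) : Lten g gbar y = coefL g gbar y • (g y * (gbar y)⁻¹ * g y) := rfl

lemma coefL_pos (hgn : NondegM g) (hgbarn : NondegM gbar) (y : ι → ℝ) :
    0 < coefL g gbar y :=
  Real.rpow_pos_of_pos (abs_pos.mpr (div_ne_zero (hgbarn y) (hgn y))) _

lemma q_diff (hg : SmoothM g) (hgbar : SmoothM gbar) (hgn : NondegM g) :
    Differentiable ℝ fun y => (gbar y).det / (g y).det := by
  simp only [div_eq_mul_inv]
  exact (diff_det (dm_of_smooth hgbar)).mul ((diff_det (dm_of_smooth hg)).inv hgn)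

lemma coefL_diff (hg : SmoothM g) (hgbar : SmoothM gbar) (hgn : NondegM g)
    (hgbarn : NondegM gbar) : Differentiable ℝ (coefL g gbar) := by
  intro x
  have hq0 : (gbar x).det / (g x).det ≠ 0 := div_ne_zero (hgbarn x) (hgn x)
  exact ((abs_rpow_hasDeriv hq0 _).comp_hasFDerivAt x
    ((q_diff hg hgbar hgn) x).hasFDerivAt).differentiableAt

lemma dm_L (hg : SmoothM g) (hgbar : SmoothM gbar) (hgn : NondegM g)
    (hgbarn : NondegM gbar) : Dm (Lten g gbar) := by
  have : Lten g gbar = fun y => coefL g gbar y • (g y * (gbar y)⁻¹ * g y) := rfl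
  rw [this]
  exact dm_smul (coefL_diff hg hgbar hgn hgbarn)
    (dm_mul (dm_mul (dm_of_smooth hg) (dm_inv (dm_of_smooth hgbar) hgbarn))
      (dm_of_smooth hg))

lemma detL_eq (hgbarn : NondegM gbar) (y : ι → ℝ) :
    (Lten g gbar y).det
      = coefL g gbar y ^ Fintype.card ι * ((g y).det * ((gbar y).det)⁻¹ * (g y).det) := by
  rw [Lten_eq, Matrix.det_smul, Matrix.det_mul, Matrix.det_mul, Matrix.det_nonsing_inv,
    Ring.inverse_eq_inv']

lemma detL_ne (hgn : NondegM g) (hgbarn : NondegM gbar) (y : ι → ℝ) :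
    (Lten g gbar y).det ≠ 0 := by
  rw [detL_eq hgbarn y]
  have hc := coefL_pos hgn hgbarn y
  exact mul_ne_zero (pow_ne_zero _ (ne_of_gt hc))
    (mul_ne_zero (mul_ne_zero (hgn y) (inv_ne_zero (hgbarn y))) (hgn y))

lemma coefL_pow (hgn : NondegM g) (hgbarn : NondegM gbar) (y : ι → ℝ) :
    coefL g gbar y ^ (Fintype.card ι + 1) = |(gbar y).det| / |(g y).det| := by
  have hr0 : (0 : ℝ) ≤ |((gbar y).det / (g y).det)| := abs_nonneg _
  have hexp : (1 : ℝ) / (Fintype.card ι + 1) * ((Fintype.card ι + 1 : ℕ) : ℝ) = 1 := by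
    have hne : ((Fintype.card ι : ℝ) + 1) ≠ 0 := by positivity
    push_cast
    field_simp
  calc coefL g gbar y ^ (Fintype.card ι + 1)
      = |((gbar y).det / (g y).det)|
          ^ ((1 : ℝ) / (Fintype.card ι + 1) * ((Fintype.card ι + 1 : ℕ) : ℝ)) := by
        rw [← Real.rpow_natCast (coefL g gbar y) (Fintype.card ι + 1), coefL,
          ← Real.rpow_mul hr0]
    _ = |((gbar y).det / (g y).det)| ^ (1 : ℝ) := by rw [hexp]
    _ = |(gbar y).det| / |(g y).det| := by rw [Real.rpow_one, abs_div]

/-- Reconstruction of `gbar` from `g` and `L`. -/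
lemma gbar_rec (hgn : NondegM g) (hgbarn : NondegM gbar) (y : ι → ℝ) :
    gbar y = (|(g y).det| / |(Lten g gbar y).det|)
      • (g y * (Lten g gbar y)⁻¹ * g y) := by
  have hc := coefL_pos hgn hgbarn y
  have hcne : coefL g gbar y ≠ 0 := ne_of_gt hc
  have hGunit : IsUnit (g y).det := isUnit_iff_ne_zero.mpr (hgn y)
  have hBunit : IsUnit (gbar y).det := isUnit_iff_ne_zero.mpr (hgbarn y)
  have hGG : g y * (g y)⁻¹ = 1 := Matrix.mul_nonsing_inv _ hGunit
  have hGG' : (g y)⁻¹ * g y = 1 := Matrix.nonsing_inv_mul _ hGunit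
  have hBB : gbar y * (gbar y)⁻¹ = 1 := Matrix.mul_nonsing_inv _ hBunit
  have hBB' : (gbar y)⁻¹ * gbar y = 1 := Matrix.nonsing_inv_mul _ hBunit
  have hG1 : ∀ M : Matrix ι ι ℝ, g y * ((g y)⁻¹ * M) = M := fun M => by
    rw [← Matrix.mul_assoc, hGG, Matrix.one_mul]
  have hG2 : ∀ M : Matrix ι ι ℝ, (g y)⁻¹ * (g y * M) = M := fun M => by
    rw [← Matrix.mul_assoc, hGG', Matrix.one_mul]
  have hB2 : ∀ M : Matrix ι ι ℝ, (gbar y)⁻¹ * (gbar y * M) = M := fun M => by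
    rw [← Matrix.mul_assoc, hBB', Matrix.one_mul]
  have hLinv : (Lten g gbar y)⁻¹
      = (coefL g gbar y)⁻¹ • ((g y)⁻¹ * gbar y * (g y)⁻¹) := by
    refine Matrix.inv_eq_right_inv ?_
    rw [Lten_eq, Matrix.smul_mul, Matrix.mul_smul, smul_smul,
      mul_inv_cancel₀ hcne]
    simp only [Matrix.mul_assoc, hG1, hB2, hGG]
    rw [one_smul]
  have hGLG : g y * (Lten g gbar y)⁻¹ * g y = (coefL g gbar y)⁻¹ • gbar y := by
    rw [hLinv, Matrix.mul_smul, Matrix.smul_mul]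
    congr 1
    simp only [Matrix.mul_assoc, hG1, hGG', Matrix.mul_one]
  have habsL : |(Lten g gbar y).det|
      = coefL g gbar y ^ Fintype.card ι * (|(g y).det| * |(gbar y).det|⁻¹ * |(g y).det|) := by
    rw [detL_eq hgbarn y, abs_mul, abs_mul, abs_mul, abs_inv, abs_pow, abs_of_pos hc]
  have hG0 : |(g y).det| ≠ 0 := abs_ne_zero.mpr (hgn y)
  have h2 : |(gbar y).det| = coefL g gbar y ^ (Fintype.card ι + 1) * |(g y).det| := by
    rw [coefL_pow hgn hgbarn y, div_mul_cancel₀ _ hG0]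
  have hLval : |(Lten g gbar y).det| = (coefL g gbar y)⁻¹ * |(g y).det| := by
    rw [habsL, h2]
    field_simp
    ring
  have hcoef : |(g y).det| / |(Lten g gbar y).det| = coefL g gbar y := by
    rw [hLval]
    field_simp
  rw [hcoef, hGLG, smul_smul, mul_inv_cancel₀ hcne, one_smul]

end LtenFacts

section Main

variable {ι : Type} [Fintype ι] [DecidableEq ι]
variable {g gbar : (ι → ℝ) → Matrix ι ι ℝ}

lemma main_forward (hg : SmoothM g) (hgs : SymM g) (hgn : NondegM g)
    (hgbar : SmoothM gbar) (hgbars : SymM gbar) (hgbarn : NondegM gbar)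
    (hG : ∀ k i j x, christoffel g k i j x = christoffel gbar k i j x) :
    ∀ k i j x, covDer2 g (Lten g gbar) k i j x = 0 := by
  have hGm : ∀ k x, Gm gbar k x = Gm g k x := by
    intro k x
    ext l m
    exact (hG l k m x).symm
  have hnb : ∀ k x, pdM k gbar x = (Gm g k x)ᵀ * gbar x + gbar x * Gm g k x := by
    intro k x
    rw [← hGm k x]
    exact nabla_metric hgbars hgbarn k x
  have hnbg : ∀ k x, pdM k g x = (Gm g k x)ᵀ * g x + g x * Gm g k x :=
    fun k x => nabla_metric hgs hgn k x
  have hpdq : ∀ k x, pd k (fun y => (gbar y).det / (g y).det) x = 0 := by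
    intro k x
    have hdg : DifferentiableAt ℝ (fun y => (g y).det) x := (diff_det (dm_of_smooth hg)) x
    have hdb : DifferentiableAt ℝ (fun y => (gbar y).det) x :=
      (diff_det (dm_of_smooth hgbar)) x
    rw [pd_congr (h := fun y => (gbar y).det * ((g y).det)⁻¹)
        (fun y => div_eq_mul_inv _ _) k x,
      pd_mul hdb (hdg.fun_inv (hgn x)), pd_inv hdg (hgn x),
      pd_det_of_nab (dm_of_smooth hgbar) (hnb k x),
      pd_det_of_nab (dm_of_smooth hg) (hnbg k x)]
    field_simp [hgn x]
    ring
  have hpdc : ∀ k x, pd k (coefL g gbar) x = 0 := by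
    intro k x
    have hq0 : (gbar x).det / (g x).det ≠ 0 := div_ne_zero (hgbarn x) (hgn x)
    have hface : coefL g gbar
        = fun y => |((gbar y).det / (g y).det)| ^ ((1 : ℝ) / (Fintype.card ι + 1)) := rfl
    rw [hface, pd_comp_deriv (abs_rpow_hasDeriv hq0 _) ((q_diff hg hgbar hgn) x) k,
      hpdq k x, mul_zero]
  have hnabL : ∀ k x, pdM k (Lten g gbar) x
      = (Gm g k x)ᵀ * Lten g gbar x + Lten g gbar x * Gm g k x := by
    intro k x
    rw [pdM_congr (fun y => Lten_eq y) k x,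
      pdM_smul (coefL_diff hg hgbar hgn hgbarn)
        (dm_mul (dm_mul (dm_of_smooth hg) (dm_inv (dm_of_smooth hgbar) hgbarn))
          (dm_of_smooth hg)) k x,
      hpdc k x, zero_smul, zero_add,
      nab_sandwich (dm_of_smooth hg) hgs hgn (dm_of_smooth hgbar) hgbarn (hnb k x)]
    rw [smul_add, Lten_eq, Matrix.mul_smul, Matrix.smul_mul]
  intro k i j x
  rw [covDer2_eq, hnabL k x]
  simp only [Matrix.sub_apply, Matrix.add_apply]
  ring

lemma main_backward (hg : SmoothM g) (hgs : SymM g) (hgn : NondegM g)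
    (hgbar : SmoothM gbar) (hgbars : SymM gbar) (hgbarn : NondegM gbar)
    (hcov : ∀ k i j x, covDer2 g (Lten g gbar) k i j x = 0) :
    ∀ k i j x, christoffel g k i j x = christoffel gbar k i j x := by
  have hLd : Dm (Lten g gbar) := dm_L hg hgbar hgn hgbarn
  have hL0 : ∀ y, (Lten g gbar y).det ≠ 0 := detL_ne hgn hgbarn
  have hnabL : ∀ k x, pdM k (Lten g gbar) x
      = (Gm g k x)ᵀ * Lten g gbar x + Lten g gbar x * Gm g k x := by
    intro k x
    ext i j
    have h := hcov k i j x
    rw [covDer2_eq] at h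
    simp only [Matrix.sub_apply, Matrix.add_apply] at h ⊢
    linarith
  have hnbg : ∀ k x, pdM k g x = (Gm g k x)ᵀ * g x + g x * Gm g k x :=
    fun k x => nabla_metric hgs hgn k x
  have hphid : Differentiable ℝ fun y => |(g y).det| / |(Lten g gbar y).det| := by
    simp only [div_eq_mul_inv]
    intro x
    exact ((diffAt_abs ((diff_det (dm_of_smooth hg)) x) (hgn x)).mul
      ((diffAt_abs ((diff_det hLd) x) (hL0 x)).inv (abs_ne_zero.mpr (hL0 x))))
  have hpdphi : ∀ k x, pd k (fun y => |(g y).det| / |(Lten g gbar y).det|) x = 0 := by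
    intro k x
    have hdg : DifferentiableAt ℝ (fun y => (g y).det) x := (diff_det (dm_of_smooth hg)) x
    have hdL : DifferentiableAt ℝ (fun y => (Lten g gbar y).det) x := (diff_det hLd) x
    have hag : DifferentiableAt ℝ (fun y => |(g y).det|) x := diffAt_abs hdg (hgn x)
    have haL : DifferentiableAt ℝ (fun y => |(Lten g gbar y).det|) x :=
      diffAt_abs hdL (hL0 x)
    rw [pd_congr (h := fun y => |(g y).det| * (|(Lten g gbar y).det|)⁻¹)
        (fun y => div_eq_mul_inv _ _) k x,
      pd_mul hag (haL.fun_inv (abs_ne_zero.mpr (hL0 x))),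
      pd_inv haL (abs_ne_zero.mpr (hL0 x)),
      pd_abs hdg (hgn x), pd_abs hdL (hL0 x),
      pd_det_of_nab (dm_of_smooth hg) (hnbg k x),
      pd_det_of_nab hLd (hnabL k x)]
    have e1 : (SignType.sign ((g x).det) : ℝ) * (2 * Matrix.trace (Gm g k x) * (g x).det)
        = 2 * Matrix.trace (Gm g k x) * |(g x).det| := by
      rw [← sign_mul_self' (hgn x)]
      ring
    have e2 : (SignType.sign ((Lten g gbar x).det) : ℝ)
        * (2 * Matrix.trace (Gm g k x) * (Lten g gbar x).det)
        = 2 * Matrix.trace (Gm g k x) * |(Lten g gbar x).det| := by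
      rw [← sign_mul_self' (hL0 x)]
      ring
    rw [e1, e2]
    have hb0 : |(Lten g gbar x).det| ≠ 0 := abs_ne_zero.mpr (hL0 x)
    field_simp
    have hB : |(g x).det| * (2 * (Gm g k x).trace * |(Lten g gbar x).det|)
          * |(Lten g gbar x).det|
        = 2 * (Gm g k x).trace * |(g x).det| * (Lten g gbar x).det ^ 2 := by
      rw [pow_two, ← abs_mul_abs_self ((Lten g gbar x).det)]
      ring
    ring
  have hnb : ∀ k x, pdM k gbar x = (Gm g k x)ᵀ * gbar x + gbar x * Gm g k x := by
    intro k x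
    rw [pdM_congr (gbar_rec hgn hgbarn) k x,
      pdM_smul hphid
        (dm_mul (dm_mul (dm_of_smooth hg) (dm_inv hLd hL0)) (dm_of_smooth hg)) k x,
      hpdphi k x, zero_smul, zero_add,
      nab_sandwich (dm_of_smooth hg) hgs hgn hLd hL0 (hnabL k x)]
    conv_rhs => rw [gbar_rec hgn hgbarn x]
    rw [smul_add, Matrix.mul_smul, Matrix.smul_mul]
  intro k i j x
  exact (christoffel_eq_of_nabla hgs hgbars hgbarn hnb k i j x).symm

end Main

/-- for projectively equivalent metrics `g, ḡ` (encoded, following Sinjukov,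
by the fact that `L = L(g,ḡ)` solves `∇_X L = X^♭ ⊙ Λ`), the following are equivalent:
(1) `g` and `ḡ` are affinely equivalent (same Levi-Civita connection, i.e. the same
Christoffel symbols); (2) `L` is parallel for the Levi-Civita connection of `g`;
(3) `Λ ≡ 0`. -/
theorem statement_1 {ι : Type} [Fintype ι] [DecidableEq ι]
    (g gbar : (ι → ℝ) → Matrix ι ι ℝ) (Λ : (ι → ℝ) → ι → ℝ)
    (hg : SmoothM g) (hgs : SymM g) (hgn : NondegM g)
    (hgbar : SmoothM gbar) (hgbars : SymM gbar) (hgbarn : NondegM gbar)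
    (hproj : ProjEqn g (Lten g gbar) Λ) :
    ((∀ k i j x, christoffel g k i j x = christoffel gbar k i j x) ↔
      (∀ k i j x, covDer2 g (Lten g gbar) k i j x = 0)) ∧
    ((∀ k i j x, covDer2 g (Lten g gbar) k i j x = 0) ↔ (∀ x i, Λ x i = 0)) := by


  constructor
  · constructor
    · intro hG
      exact main_forward hg hgs hgn hgbar hgbars hgbarn hG
    · intro hcov
      exact main_backward hg hgs hgn hgbar hgbars hgbarn hcov
  · constructor
    · intro hcov x i
      by_contra hne
      have hcol : ∀ k, g x k i = 0 := by
        intro k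
        have h := (hcov k i i x).symm.trans (hproj k i i x)
        have h2 : g x k i * Λ x i = 0 := by linarith
        exact (mul_eq_zero.mp h2).resolve_right hne
      exact hgn x (Matrix.det_eq_zero_of_column_eq_zero i hcol)
    · intro hz k i j x
      rw [hproj k i j x, hz x j, hz x i, mul_zero, mul_zero, add_zero]
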